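/- Distinctness of instances of an isotropy element: suppose 𝕋₁ + 𝕋₂ is non-trivial (does not prove x = y for distinct variables) and [t] is an element of the logical isotropy group G_{𝕋₁+𝕋₂}(Mₙ) of the free model on n generators, where t is a closed term over Σ₁ ∪ Σ₂ ∪ Σ₃ ∪ {x}. Then for any distinct indices i ≠ j, the terms t(xᵢ) = t[xᵢ/x] and t(x_j) = t[x_j/x] are not ≅-isomorphic. -/

import Mathlib

/-- First-order terms over symbols `S` with arity `ar` and variables `V`. -/
inductive Tm (S : Type) (ar : S → ℕ) (V : Type) : Type
  | var : V → Tm S ar V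
  | app : (f : S) → (Fin (ar f) → Tm S ar V) → Tm S ar V

namespace Tm
variable {S : Type} {ar : S → ℕ} {V W : Type}

def mapVar (g : V → W) : Tm S ar V → Tm S ar W
  | var v => var (g v)
  | app f ts => app f (fun i => (ts i).mapVar g)

def bind : Tm S ar V → (V → Tm S ar W) → Tm S ar W
  | var v, g => g v
  | app f ts, g => app f (fun i => (ts i).bind g)

/-- All variables of a term belong to a given set. -/
def VarsIn : Tm S ar V → Set V → Prop
  | var v, A => v ∈ A
  | app _ ts, A => ∀ i, VarsIn (ts i) A

/-- The term contains at least one variable. -/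
def HasVar : Tm S ar V → Prop
  | var _ => True
  | app _ ts => ∃ i, HasVar (ts i)

end Tm

/-- The combined signature: operation symbols of the two theories (`op`),
generator constants `y₁,…,yₙ` (`gen`), and indeterminate constants `x = ind 0`,
`xᵢ = ind i` (`ind`). -/
inductive CSym (F : Bool → Type) (n : ℕ) : Type
  | op : (b : Bool) → F b → CSym F n
  | gen : Fin n → CSym F n
  | ind : ℕ → CSym F n

namespace CSym
variable {F : Bool → Type} {n : ℕ}

def arity (arF : ∀ b, F b → ℕ) : CSym F n → ℕ
  | op b f => arF b f
  | gen _ => 0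
  | ind _ => 0

/-- Which of the four component signatures a symbol belongs to:
`0 = Σ₁`, `1 = Σ₂`, `2 = Σ₃`, `3 = Σ₄`. -/
def sig : CSym F n → Fin 4
  | op false _ => 0
  | op true _ => 1
  | gen _ => 2
  | ind _ => 3

end CSym
section Setup

variable (F : Bool → Type) (arF : ∀ b, F b → ℕ) (n : ℕ)

/-- Closed terms over the combined signature `Σ = Σ₁ ∪ Σ₂ ∪ Σ₃ ∪ Σ₄`. -/
abbrev CT := Tm (CSym F n) (CSym.arity arF) Empty

/-- The root symbol of a closed term. -/
def rootSym : CT F arF n → CSym F n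
  | .var v => v.elim
  | .app f _ => f

/-- All symbols of the closed term satisfy the predicate `P`. -/
def InSig (P : CSym F n → Prop) : CT F arF n → Prop
  | .var v => v.elim
  | .app f ts => P f ∧ ∀ i, InSig P (ts i)

/-- A closed term is pure if all of its symbols belong to a single one of the
four component signatures. -/
def IsPure (t : CT F arF n) : Prop := ∃ k : Fin 4, InSig F arF n (fun s => s.sig = k) t

/-- The rank of a closed term: `0` if pure, and otherwise `1` plus the maximal
rank of its alien subterms. -/
def rank : CT F arF n → ℕ
  | .var v => v.elim
  | .app f ts =>
      Finset.univ.sup fun i =>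
        rank (ts i) + (if (rootSym F arF n (ts i)).sig = f.sig then 0 else 1)

/-- The maximal subterms of `t` whose root is outside signature `k`. -/
def aliensUnder (k : Fin 4) : CT F arF n → Set (CT F arF n)
  | .var v => v.elim
  | .app f ts =>
      if f.sig = k then ⋃ i, aliensUnder k (ts i) else {Tm.app f ts}

/-- The alien subterms of a closed term (relative to the signature of its root). -/
def aliensSet : CT F arF n → Set (CT F arF n)
  | .var v => v.elim
  | .app f ts => ⋃ i, aliensUnder F arF n f.sig (ts i)

/-- All alien subterms at arbitrary depth. -/
def allAliensSet : CT F arF n → Set (CT F arF n)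
  | .var v => v.elim
  | .app f ts =>
      ⋃ i, (if (rootSym F arF n (ts i)).sig = f.sig then (∅ : Set _) else {ts i}) ∪
        allAliensSet (ts i)

/-- View a closed combined term through the layer of theory `b`: keep the
top part built from `Σ_b`-symbols and regard the maximal non-`Σ_b`-rooted
subterms as opaque constants. -/
def layerize (b : Bool) : CT F arF n → Tm (F b) (arF b) (CT F arF n)
  | .app (.op b' f) ts =>
      if h : b' = b then h ▸ (Tm.app f (fun i => layerize b' (ts i)))
      else Tm.var (Tm.app (.op b' f) ts)
  | t => Tm.var t

end Setup
section Setup2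

variable (F : Bool → Type) (arF : ∀ b, F b → ℕ) (n : ℕ)
variable (Ax : ∀ b, Set (Tm (F b) (arF b) ℕ × Tm (F b) (arF b) ℕ))

mutual
/-- The isomorphism relation `≅` on closed combined terms, defined together
with the layer congruences: two terms are isomorphic iff their roots lie in the
same component signature and their alien abstractions are congruent modulo the
corresponding theory (for the constant signatures `Σ₃, Σ₄` this is syntactic
equality). -/
inductive Iso : CT F arF n → CT F arF n → Prop where
  | opEq (b : Bool) (u v : CT F arF n) :
      (∃ g : F b, rootSym F arF n u = .op b g) →
      (∃ g : F b, rootSym F arF n v = .op b g) →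
      LEq b (layerize F arF n b u) (layerize F arF n b v) → Iso u v
  | constEq (t : CT F arF n) :
      ((rootSym F arF n t).sig = 2 ∨ (rootSym F arF n t).sig = 3) → Iso t t

/-- The congruence `≈_b` on `Σ_b`-terms whose constants are closed combined
terms (representing their `≅`-classes): generated by the substitution instances
of the axioms of `𝕋_b` together with the identification of `≅`-related
constants. -/
inductive LEq : (b : Bool) →
    Tm (F b) (arF b) (CT F arF n) → Tm (F b) (arF b) (CT F arF n) → Prop where
  | refl (b) (t) : LEq b t t
  | symm {b s t} : LEq b s t → LEq b t s
  | trans {b s t u} : LEq b s t → LEq b t u → LEq b s u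
  | congr (b) (g : F b) (ts us : Fin (arF b g) → Tm (F b) (arF b) (CT F arF n)) :
      (∀ i, LEq b (ts i) (us i)) → LEq b (.app g ts) (.app g us)
  | varRel (b) (s t : CT F arF n) : Iso s t → LEq b (.var s) (.var t)
  | ax (b) (u v : Tm (F b) (arF b) ℕ) : (u, v) ∈ Ax b →
      ∀ σ : ℕ → Tm (F b) (arF b) (CT F arF n), LEq b (u.bind σ) (v.bind σ)
end

end Setup2
section Setup3

variable (F : Bool → Type) (arF : ∀ b, F b → ℕ) (n : ℕ)
variable (Ax : ∀ b, Set (Tm (F b) (arF b) ℕ × Tm (F b) (arF b) ℕ))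

/-- The combined algebra `𝒜 = Term^c(Σ)/≅`. -/
abbrev Alg := Quot (Iso F arF n Ax)

/-- Provable equality in the theory `𝕋_b` on terms with variables (equivalently
the smallest `Σ_b`-congruence containing all substitution instances of the
axioms of `𝕋_b`); with `V := Alg` this is the congruence `≈_b` on
`Term^c(Σ_b, Term^c(Σ)/≅)`. -/
inductive AxCong (b : Bool) {V : Type} : Tm (F b) (arF b) V → Tm (F b) (arF b) V → Prop where
  | refl (t) : AxCong b t t
  | symm {s t} : AxCong b s t → AxCong b t s
  | trans {s t u} : AxCong b s t → AxCong b t u → AxCong b s u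
  | congr (g : F b) (ts us : Fin (arF b g) → Tm (F b) (arF b) V) :
      (∀ i, AxCong b (ts i) (us i)) → AxCong b (.app g ts) (.app g us)
  | ax (u v : Tm (F b) (arF b) ℕ) : (u, v) ∈ Ax b →
      ∀ σ : ℕ → Tm (F b) (arF b) V, AxCong b (u.bind σ) (v.bind σ)

/-- Abstraction of alien subterms: `[t]ᵇ_≅ ∈ Term^c(Σ_b, Term^c(Σ)/≅)`. -/
def absQ (b : Bool) (t : CT F arF n) : Tm (F b) (arF b) (Alg F arF n Ax) :=
  (layerize F arF n b t).mapVar (Quot.mk _)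

attribute [local instance] Classical.propDecidable

/-- The interpretation `t^𝒜` of a closed combined term in the combined algebra:
a term collapses to (the class of) an alien subterm whose class its alien
abstraction is `≈_b`-congruent to, and is interpreted by its own class
otherwise. -/
noncomputable def interp : CT F arF n → Alg F arF n Ax
  | .app (.op b g) ts =>
      let t' : CT F arF n := .app (.op b g) (fun i => (interp (ts i)).out)
      if h : ∃ u, u ∈ aliensSet F arF n t' ∧
          AxCong F arF Ax b (absQ F arF n Ax b t') (.var (Quot.mk _ u))
      then Quot.mk _ h.choose
      else Quot.mk _ t'
  | t => Quot.mk _ t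

end Setup3
section Setup4

variable (F : Bool → Type) (arF : ∀ b, F b → ℕ) (n : ℕ)
variable (Ax : ∀ b, Set (Tm (F b) (arF b) ℕ × Tm (F b) (arF b) ℕ))

/-- Substitution of a closed term `w` for the indeterminate constant `x_j` in a
closed combined term. -/
def substInd (j : ℕ) (w : CT F arF n) : CT F arF n → CT F arF n
  | .var v => v.elim
  | .app (.ind j') ts => if j' = j then w else .app (.ind j') ts
  | .app f ts => .app f (fun i => substInd j w (ts i))

/-- The indeterminate constant `x_i` as a closed term (`x = xTm 0`). -/
def xTm (i : ℕ) : CT F arF n := .app (.ind i) Fin.elim0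

/-- Replace every indeterminate constant occurring in a term by `x`. -/
def indToX : CT F arF n → CT F arF n
  | .var v => v.elim
  | .app (.ind _) _ => xTm F arF n 0
  | .app f ts => .app f (fun i => indToX (ts i))

/-- Embedding of `Σ_b`-terms into combined terms. -/
def embedOp (b : Bool) {V : Type} : Tm (F b) (arF b) V → Tm (CSym F n) (CSym.arity arF) V
  | .var v => .var v
  | .app g ts => .app (.op b g) (fun i => embedOp b (ts i))

/-- Provable equality for the (combination of the) theories `𝕋_b` (`b ∈ B`) on
closed terms over the sub-signature of symbols satisfying `P`: the smallest
congruence on that set of closed terms containing all substitution instances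
(by closed terms over the sub-signature) of the axioms. -/
inductive PE (B : Set Bool) (P : CSym F n → Prop) : CT F arF n → CT F arF n → Prop where
  | refl (t) : InSig F arF n P t → PE B P t t
  | symm {s t} : PE B P s t → PE B P t s
  | trans {s t u} : PE B P s t → PE B P t u → PE B P s u
  | congr (f : CSym F n) (ts us : Fin (CSym.arity arF f) → CT F arF n) : P f →
      (∀ i, PE B P (ts i) (us i)) → PE B P (.app f ts) (.app f us)
  | ax (b : Bool) (hb : b ∈ B) (u v : Tm (F b) (arF b) ℕ) (h : (u, v) ∈ Ax b)
      (σ : ℕ → CT F arF n) : (∀ m, InSig F arF n P (σ m)) →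
      PE B P ((embedOp F arF n b u).bind σ) ((embedOp F arF n b v).bind σ)

/-- The sub-signature consisting of the operations of the theories in `B`, all
generator constants `y₁,…,yₙ`, and the indeterminates `x_j` with `j ∈ J`. -/
def SigP (B : Set Bool) (J : Set ℕ) : CSym F n → Prop
  | .op b _ => b ∈ B
  | .gen _ => True
  | .ind j => j ∈ J

/-- The (combination of the) theories in `B` is non-trivial: it does not prove
the equation `x = y` for distinct variables (equivalently, it does not identify
two distinct indeterminate constants). -/
def Nontriv (B : Set Bool) : Prop :=
  ¬ PE F arF n Ax B (SigP F n B Set.univ) (xTm F arF n 1) (xTm F arF n 2)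

/-- Membership of (the class of) `t` in the logical isotropy group of the free
model on `n` generators of the combination of the theories in `B`: `t` is a
closed term over the signature extended by the constant `x` that is invertible
under substitution into `x` and commutes generically with every operation. -/
def GIso (B : Set Bool) (t : CT F arF n) : Prop :=
  InSig F arF n (SigP F n B {0}) t ∧
  (∃ tinv, InSig F arF n (SigP F n B {0}) tinv ∧
    PE F arF n Ax B (SigP F n B {0}) (substInd F arF n 0 tinv t) (xTm F arF n 0) ∧
    PE F arF n Ax B (SigP F n B {0}) (substInd F arF n 0 t tinv) (xTm F arF n 0)) ∧
  ∀ b, b ∈ B → ∀ g : F b,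
    PE F arF n Ax B (SigP F n B {j | 1 ≤ j ∧ j ≤ arF b g})
      (substInd F arF n 0 (.app (.op b g) (fun i => xTm F arF n (i.val + 1))) t)
      (.app (.op b g) (fun i => substInd F arF n 0 (xTm F arF n (i.val + 1)) t))

/-- `g` is a projection in `𝕋_b`. -/
def IsProj (b : Bool) (g : F b) : Prop :=
  ∃ i : Fin (arF b g),
    AxCong F arF Ax b (V := ℕ) (.app g (fun j => .var j.val)) (.var i.val)

/-- `g` is constant in `𝕋_b`: `𝕋_b` proves `g(y₁,…,y_m) = s` for pairwise
distinct variables none of which occurs in `s`. -/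
def IsConst (b : Bool) (g : F b) : Prop :=
  ∃ s : Tm (F b) (arF b) ℕ, s.VarsIn {m | arF b g ≤ m} ∧
    AxCong F arF Ax b (V := ℕ) (.app g (fun j => .var j.val)) s

end Setup4
section Models

variable (F : Bool → Type) (arF : ∀ b, F b → ℕ) (n : ℕ)
variable (Ax : ∀ b, Set (Tm (F b) (arF b) ℕ × Tm (F b) (arF b) ℕ))

/-- Evaluation of a `Σ_b`-term in a set equipped with operations. -/
def evalTm {α : Type} (ops : ∀ b (g : F b), (Fin (arF b g) → α) → α)
    (b : Bool) {V : Type} (ρ : V → α) : Tm (F b) (arF b) V → α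
  | .var v => ρ v
  | .app g ts => ops b g (fun i => evalTm ops b ρ (ts i))

/-- A (set-based) model of the combined theory `𝕋₁ + 𝕋₂`. -/
structure TModel where
  carrier : Type
  ops : ∀ b (g : F b), (Fin (arF b g) → carrier) → carrier
  sat : ∀ b u v, (u, v) ∈ Ax b → ∀ ρ : ℕ → carrier,
      evalTm F arF ops b ρ u = evalTm F arF ops b ρ v

/-- Homomorphisms of models. -/
@[ext]
structure TModelHom (M N : TModel F arF Ax) where
  toFun : M.carrier → N.carrier
  map_ops : ∀ b (g : F b) (args : Fin (arF b g) → M.carrier),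
      toFun (M.ops b g args) = N.ops b g (fun i => toFun (args i))

/-- The identity homomorphism. -/
def TModelHom.id (M : TModel F arF Ax) : TModelHom F arF Ax M M :=
  ⟨fun a => a, fun _ _ _ => rfl⟩

/-- Composition of homomorphisms. -/
def TModelHom.comp {M M' M'' : TModel F arF Ax} (h' : TModelHom F arF Ax M' M'')
    (h : TModelHom F arF Ax M M') : TModelHom F arF Ax M M'' :=
  ⟨fun a => h'.toFun (h.toFun a), fun b g args => by
    simp [h.map_ops, h'.map_ops]⟩

/-- `M` together with the `n` elements `gens` is a free model on `n`
generators: the universal property. -/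
def IsFreeOn (M : TModel F arF Ax) (gens : Fin n → M.carrier) : Prop :=
  ∀ (N : TModel F arF Ax) (a : Fin n → N.carrier),
    ∃! h : TModelHom F arF Ax M N, ∀ i, h.toFun (gens i) = a i

end Models

/-!
Since `≅` is sound for provable equality, `t(xᵢ) ≅ t(xⱼ)` gives `𝕋₁ + 𝕋₂ ⊢ t(xᵢ) = t(xⱼ)`.
Substituting both sides into `t⁻¹` yields `xᵢ = xⱼ`, and renaming the indeterminates turns this
into `x₁ = x₂`, contradicting non-triviality.
-/

section Proof

variable {F : Bool → Type} {arF : ∀ b, F b → ℕ} {n : ℕ}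
variable {Ax : ∀ b, Set (Tm (F b) (arF b) ℕ × Tm (F b) (arF b) ℕ)}

lemma InSig.mono {P Q : CSym F n → Prop} (hPQ : ∀ f, P f → Q f) :
    ∀ {t : CT F arF n}, InSig F arF n P t → InSig F arF n Q t
  | .var v, _ => v.elim
  | .app _ _, ⟨hf, hts⟩ => ⟨hPQ _ hf, fun i => (hts i).mono hPQ⟩

lemma PE.mono {B B' : Set Bool} {P Q : CSym F n → Prop} (hB : B ⊆ B') (hPQ : ∀ f, P f → Q f)
    {s t : CT F arF n} (h : PE F arF n Ax B P s t) : PE F arF n Ax B' Q s t := by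
  induction h with
  | refl t ht => exact .refl t (ht.mono hPQ)
  | symm _ ih => exact .symm ih
  | trans _ _ ih₁ ih₂ => exact .trans ih₁ ih₂
  | congr f ts us hf _ ih => exact .congr f ts us (hPQ f hf) ih
  | ax b hb u v huv σ hσ => exact .ax b (hB hb) u v huv σ fun m => (hσ m).mono hPQ

lemma sigP_univ (f : CSym F n) : SigP F n Set.univ Set.univ f := by
  cases f <;> trivial

lemma inSig_sigP_univ : ∀ t : CT F arF n, InSig F arF n (SigP F n Set.univ Set.univ) t
  | .var v => v.elim
  | .app f ts => ⟨sigP_univ f, fun i => inSig_sigP_univ (ts i)⟩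

variable (Ax) in
abbrev PEFull : CT F arF n → CT F arF n → Prop :=
  PE F arF n Ax Set.univ (SigP F n Set.univ Set.univ)

lemma PE.toFull {B : Set Bool} {P : CSym F n → Prop} {s t : CT F arF n}
    (h : PE F arF n Ax B P s t) : PEFull Ax s t :=
  h.mono (Set.subset_univ B) fun f _ => sigP_univ f

lemma PEFull.refl {t : CT F arF n} : PEFull Ax t t := PE.refl t (inSig_sigP_univ t)

lemma PEFull.app {f : CSym F n} {ts us : Fin (CSym.arity arF f) → CT F arF n}
    (h : ∀ i, PEFull Ax (ts i) (us i)) : PEFull Ax (.app f ts) (.app f us) :=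
  .congr f ts us (sigP_univ f) h

lemma map_embedOp_bind {φ : CT F arF n → CT F arF n}
    (hφ : ∀ b g ts, φ (.app (.op b g) ts) = .app (.op b g) fun i => φ (ts i))
    (b : Bool) (u : Tm (F b) (arF b) ℕ) (σ : ℕ → CT F arF n) :
    φ ((embedOp F arF n b u).bind σ) = (embedOp F arF n b u).bind (φ ∘ σ) := by
  induction u with
  | var m => rfl
  | app g ts ih => exact (hφ b g _).trans (congrArg _ (funext ih))

-- The constants have arity zero, so only the operation symbols constrain `φ`.
lemma PEFull.map {φ : CT F arF n → CT F arF n}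
    (hφ : ∀ b g ts, φ (.app (.op b g) ts) = .app (.op b g) fun i => φ (ts i))
    {s t : CT F arF n} (h : PEFull Ax s t) : PEFull Ax (φ s) (φ t) := by
  induction h with
  | refl => exact .refl
  | symm _ ih => exact .symm ih
  | trans _ _ ih₁ ih₂ => exact .trans ih₁ ih₂
  | congr f ts us _ _ ih =>
    cases f with
    | op b g => rw [hφ, hφ]; exact .app ih
    | gen | ind =>
      obtain rfl : ts = us := funext fun i => Fin.elim0 i
      exact .refl
  | ax b _ u v huv σ _ =>
    rw [map_embedOp_bind hφ, map_embedOp_bind hφ]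
    exact .ax b (Set.mem_univ b) u v huv _ fun m => inSig_sigP_univ _

def unlayer (b : Bool) (s : Tm (F b) (arF b) (CT F arF n)) : CT F arF n :=
  (embedOp F arF n b s).bind id

lemma unlayer_app (b : Bool) (g : F b) (ts : Fin (arF b g) → Tm (F b) (arF b) (CT F arF n)) :
    unlayer b (.app g ts) = .app (.op b g) fun i => unlayer b (ts i) := rfl

lemma unlayer_layerize (b : Bool) (u : CT F arF n) : unlayer b (layerize F arF n b u) = u := by
  induction u with
  | var v => exact v.elim
  | app f ts ih =>
    cases f with
    | op b' g =>
      by_cases h : b' = b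
      · subst h
        simp only [layerize, dite_true, unlayer_app, ih]
      · simp only [layerize, h, dite_false]; rfl
    | gen | ind => rfl

lemma unlayer_bind (b : Bool) (u : Tm (F b) (arF b) ℕ) (σ : ℕ → Tm (F b) (arF b) (CT F arF n)) :
    unlayer b (u.bind σ) = (embedOp F arF n b u).bind fun m => unlayer b (σ m) := by
  induction u with
  | var m => rfl
  | app g ts ih => exact congrArg _ (funext ih)

theorem Iso.toPEFull {u v : CT F arF n} (h : Iso F arF n Ax u v) : PEFull Ax u v := by
  refine Iso.rec (motive_1 := fun u v _ => PEFull Ax u v)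
    (motive_2 := fun b s t _ => PEFull Ax (unlayer b s) (unlayer b t)) ?_ ?_ ?_ ?_ ?_ ?_ ?_ ?_ h
  · intro b u v _ _ _ ih
    rwa [unlayer_layerize, unlayer_layerize] at ih
  · exact fun _ _ => .refl
  · exact fun _ _ => .refl
  · exact fun _ ih => .symm ih
  · exact fun _ _ ih₁ ih₂ => .trans ih₁ ih₂
  · exact fun _ _ _ _ _ ih => .app ih
  · exact fun _ _ _ _ ih => ih
  · intro b u v huv σ
    rw [unlayer_bind, unlayer_bind]
    exact .ax b (Set.mem_univ b) u v huv _ fun m => inSig_sigP_univ _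

lemma substInd_xTm_self (j : ℕ) (w : CT F arF n) : substInd F arF n j w (xTm F arF n j) = w :=
  if_pos rfl

lemma substInd_substInd (j : ℕ) (w₁ w₂ : CT F arF n) (s : CT F arF n) :
    substInd F arF n j w₂ (substInd F arF n j w₁ s)
      = substInd F arF n j (substInd F arF n j w₂ w₁) s := by
  induction s with
  | var v => exact v.elim
  | app f ts ih =>
    cases f with
    | op | gen => exact congrArg _ (funext ih)
    | ind k => by_cases h : k = j <;> simp [substInd, h]

lemma PEFull.substInd_congr (j : ℕ) (w : CT F arF n) {s t : CT F arF n} (h : PEFull Ax s t) :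
    PEFull Ax (substInd F arF n j w s) (substInd F arF n j w t) :=
  h.map fun _ _ _ => rfl

lemma PEFull.substInd_congr_arg (j : ℕ) {w w' : CT F arF n} (h : PEFull Ax w w')
    (s : CT F arF n) :
    PEFull Ax (substInd F arF n j w s) (substInd F arF n j w' s) := by
  induction s with
  | var v => exact v.elim
  | app f ts ih =>
    cases f with
    | op | gen => exact .app ih
    | ind k =>
      by_cases hk : k = j
      · simpa [_root_.substInd, hk] using h
      · simpa [_root_.substInd, hk] using .refl

theorem PEFull.of_substInd_left_inverse {t tinv w w' : CT F arF n}
    (hinv : PEFull Ax (substInd F arF n 0 t tinv) (xTm F arF n 0))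
    (h : PEFull Ax (substInd F arF n 0 w t) (substInd F arF n 0 w' t)) : PEFull Ax w w' := by
  -- `w ≈ tinv[t[w/x]/x]` for every `w`
  have hw : ∀ w, PEFull Ax (substInd F arF n 0 (substInd F arF n 0 w t) tinv) w := fun w => by
    simpa only [← substInd_substInd, substInd_xTm_self] using hinv.substInd_congr 0 w
  exact (hw w).symm.trans ((h.substInd_congr_arg 0 tinv).trans (hw w'))

def renameInd (r : ℕ → ℕ) : CT F arF n → CT F arF n
  | .var v => v.elim
  | .app (.op b g) ts => .app (.op b g) fun i => renameInd r (ts i)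
  | .app (.gen k) ts => .app (.gen k) fun i => renameInd r (ts i)
  | .app (.ind k) ts => .app (.ind (r k)) fun i => renameInd r (ts i)

lemma renameInd_xTm (r : ℕ → ℕ) (i : ℕ) : renameInd r (xTm F arF n i) = xTm F arF n (r i) :=
  congrArg (Tm.app _) (funext fun q => q.elim0)

lemma Nontriv.not_pe_xTm (hnt : Nontriv F arF n Ax Set.univ) {i j : ℕ} (hij : i ≠ j) :
    ¬ PEFull Ax (xTm F arF n i) (xTm F arF n j) := fun h => by
  have h12 := h.map (φ := renameInd fun k => if k = i then 1 else if k = j then 2 else 0)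
    fun _ _ _ => rfl
  simp only [renameInd_xTm, if_pos, if_neg hij.symm] at h12
  exact hnt h12

end Proof

section Statement
variable (F : Bool → Type) (arF : ∀ b, F b → ℕ) (n : ℕ)
variable (Ax : ∀ b, Set (Tm (F b) (arF b) ℕ × Tm (F b) (arF b) ℕ))

/-- Distinctness of instances of an isotropy element: if `𝕋₁ + 𝕋₂` is
non-trivial and `[t]` belongs to the logical isotropy group of the free model on
`n` generators, then `t(xᵢ)` and `t(xⱼ)` are not isomorphic for distinct
`i, j ≥ 1`. -/
theorem isotropy_instances_distinct (hnt : Nontriv F arF n Ax Set.univ)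
    (t : CT F arF n) (ht : GIso F arF n Ax Set.univ t)
    (i j : ℕ) (hi : 1 ≤ i) (hj : 1 ≤ j) (hij : i ≠ j) :
    ¬ Iso F arF n Ax (substInd F arF n 0 (xTm F arF n i) t)
        (substInd F arF n 0 (xTm F arF n j) t) := by
  obtain ⟨-, ⟨tinv, -, -, hinv⟩, -⟩ := ht
  exact fun hIso => hnt.not_pe_xTm hij (hinv.toFull.of_substInd_left_inverse hIso.toPEFull)
end Statement
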